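/- Let q ≥ 2 be an integer, d | q a proper divisor, χ* a Dirichlet character mod d with at least one prime p | q, p ∤ d, and F(s) = ∏_{p|q}(1 - χ*(p)p^{-s}). For every real t and every real h > 0, the number N(t,h) of zeros iη of F (counted with multiplicity) with t ≤ η ≤ t + h satisfies N(t,h) ≤ C · h · (ω(q)/h + log q + h·r/(h² + t²)) for an absolute constant C, where ω(q) is the number of distinct prime factors of q and r is the number of primes p | q with χ*(p) = 1. -/

import Mathlib

/-!
Each factor `1 - c b^{-s}` (`b > 1`) is entire with derivative `c b^{-s} log b`, which equals
`log b ≠ 0` at a zero. So all zeros of a factor are simple, and the multiplicity of a zero `ρ` of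
`F` is the number of factors vanishing at `ρ`. On the imaginary axis the zeros of the factor
at `p` differ by multiples of `2π / log p`, so a window of length `h` contains at most
`h log p / (2π) + 1` of them. Summing over `p ∣ q` and using `∑_{p ∣ q} log p ≤ log q` gives
`N(t, h) ≤ ω(q) + h log q`, which is the claim with `C = 1`.
-/

open scoped Classical

open Complex Finset Real

theorem analyticOrderAt_fun_finset_prod {𝕜 ι : Type*} [NontriviallyNormedField 𝕜]
    {s : Finset ι} {f : ι → 𝕜 → 𝕜} {z₀ : 𝕜} (hf : ∀ i ∈ s, AnalyticAt 𝕜 (f i) z₀) :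
    analyticOrderAt (fun z ↦ ∏ i ∈ s, f i z) z₀ = ∑ i ∈ s, analyticOrderAt (f i) z₀ := by
  induction s using Finset.induction with
  | empty => simp [analyticOrderAt_eq_zero]
  | insert a s ha ih =>
    simp_rw [prod_insert ha, sum_insert ha]
    rw [← ih fun i hi ↦ hf i (mem_insert_of_mem hi)]
    exact analyticOrderAt_mul (hf a (mem_insert_self a s))
      (s.analyticAt_fun_prod fun i hi ↦ hf i (mem_insert_of_mem hi))

theorem Finset.card_le_div_add_one_of_sub_mem_zmultiples {S : Finset ℝ} {a h T : ℝ}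
    (hh : 0 ≤ h) (hT : 0 < T) (hS : ∀ x ∈ S, x ∈ Set.Icc a (a + h))
    (hper : ∀ x ∈ S, ∀ y ∈ S, x - y ∈ AddSubgroup.zmultiples T) :
    (#S : ℝ) ≤ h / T + 1 := by
  have hmaps : ∀ x ∈ S, ⌊(x - a) / T⌋₊ ∈ range (⌊h / T⌋₊ + 1) := fun x hx ↦
    mem_range.2 (Nat.lt_succ_of_le (Nat.floor_le_floor (by gcongr; linarith [(hS x hx).2])))
  have hinj : Set.InjOn (fun x ↦ ⌊(x - a) / T⌋₊) S := by
    intro x hx y hy hxy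
    obtain ⟨k, hk⟩ := AddSubgroup.mem_zmultiples_iff.mp (hper x hx y hy)
    have hfloor : ⌊(x - a) / T⌋ = ⌊(y - a) / T⌋ := by
      rw [← Int.natCast_floor_eq_floor (div_nonneg (sub_nonneg.2 (hS x hx).1) hT.le),
        ← Int.natCast_floor_eq_floor (div_nonneg (sub_nonneg.2 (hS y hy).1) hT.le)]
      exact congrArg _ hxy
    have hk0 : k = 0 := by
      have := Int.abs_sub_lt_one_of_floor_eq_floor hfloor
      rw [← sub_div, sub_sub_sub_cancel_right, ← hk, zsmul_eq_mul, mul_div_cancel_right₀ _ hT.ne',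
        ← Int.cast_abs, ← Int.cast_one, Int.cast_lt] at this
      exact Int.abs_lt_one_iff.mp this
    rwa [hk0, zero_smul, eq_comm, sub_eq_zero] at hk
  calc (#S : ℝ) ≤ #(range (⌊h / T⌋₊ + 1)) := mod_cast card_le_card_of_injOn _ hmaps hinj
    _ ≤ h / T + 1 := by
      rw [card_range, Nat.cast_succ]
      gcongr
      exact Nat.floor_le (by positivity)

theorem Nat.sum_log_primeFactors_le_log (n : ℕ) :
    ∑ p ∈ n.primeFactors, Real.log p ≤ Real.log n := by
  rcases eq_or_ne n 0 with rfl | hn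
  · simp
  rw [← Real.log_prod fun p hp ↦ mod_cast (Nat.prime_of_mem_primeFactors hp).ne_zero]
  refine Real.log_le_log (prod_pos fun p hp ↦ mod_cast (Nat.prime_of_mem_primeFactors hp).pos) ?_
  rw [← Nat.cast_prod]
  exact_mod_cast Nat.le_of_dvd (Nat.pos_of_ne_zero hn) (Nat.prod_primeFactors_dvd n)

noncomputable def eulerFactor (c b s : ℂ) : ℂ := 1 - c * b ^ (-s)

section eulerFactor

variable {c : ℂ}

theorem hasDerivAt_eulerFactor {b : ℂ} (hb : b ≠ 0) (s : ℂ) :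
    HasDerivAt (eulerFactor c b) (c * b ^ (-s) * log b) s :=
  ((((hasDerivAt_neg s).const_cpow (.inl hb)).const_mul c).const_sub 1).congr_deriv (by ring)

theorem analyticAt_eulerFactor {b : ℂ} (hb : b ≠ 0) (s : ℂ) : AnalyticAt ℂ (eulerFactor c b) s :=
  Differentiable.analyticAt (fun z ↦ (hasDerivAt_eulerFactor hb z).differentiableAt) s

theorem analyticOrderAt_eulerFactor {b : ℂ} (hb : b ≠ 0) (hb1 : b ≠ 1) (s : ℂ) :
    analyticOrderAt (eulerFactor c b) s = if eulerFactor c b s = 0 then 1 else 0 := by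
  split_ifs with hs
  · refine (analyticAt_eulerFactor hb s).analyticOrderAt_eq_one_of_zero_deriv_ne_zero hs ?_
    have hone : c * b ^ (-s) = 1 := by unfold eulerFactor at hs; linear_combination -hs
    rw [(hasDerivAt_eulerFactor hb s).deriv, hone, one_mul]
    exact fun hlog ↦ hb1 (by rw [← exp_log hb, hlog, Complex.exp_zero])
  · exact (analyticAt_eulerFactor hb s).analyticOrderAt_eq_zero.mpr hs

theorem eq_card_filter_eulerFactor_eq_zero_of_prod_eq_pow_mul {ι : Type*} {s : Finset ι}
    {c b : ι → ℂ} (hb : ∀ i ∈ s, b i ≠ 0) (hb1 : ∀ i ∈ s, b i ≠ 1) {ρ : ℂ} {n : ℕ}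
    {g : ℂ → ℂ} (hg : AnalyticAt ℂ g ρ) (hgρ : g ρ ≠ 0)
    (hprod : ∀ z, ∏ i ∈ s, eulerFactor (c i) (b i) z = (z - ρ) ^ n * g z) :
    n = #{i ∈ s | eulerFactor (c i) (b i) ρ = 0} := by
  have hF : AnalyticAt ℂ (fun z ↦ ∏ i ∈ s, eulerFactor (c i) (b i) z) ρ :=
    s.analyticAt_fun_prod fun i hi ↦ analyticAt_eulerFactor (hb i hi) ρ
  have horder := hF.analyticOrderAt_eq_natCast.mpr ⟨g, hg, hgρ, .of_forall hprod⟩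
  rw [analyticOrderAt_fun_finset_prod fun i hi ↦ analyticAt_eulerFactor (hb i hi) ρ,
    sum_congr rfl fun i hi ↦ analyticOrderAt_eulerFactor (hb i hi) (hb1 i hi) ρ] at horder
  simpa [sum_boole, eq_comm] using horder

theorem sub_mem_zmultiples_of_eulerFactor_mul_I_eq_zero {b : ℝ} (hb : 0 < b) (hb1 : b ≠ 1)
    {x y : ℝ} (hx : eulerFactor c b (x * I) = 0) (hy : eulerFactor c b (y * I) = 0) :
    x - y ∈ AddSubgroup.zmultiples (2 * π / Real.log b) := by
  have hc0 : c ≠ 0 := by rintro rfl; simp [eulerFactor] at hx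
  have hb0 : (b : ℂ) ≠ 0 := mod_cast hb.ne'
  have hpow : c * (b : ℂ) ^ (-(x * I)) = c * (b : ℂ) ^ (-(y * I)) := by
    unfold eulerFactor at hx hy; linear_combination hy - hx
  rw [mul_right_inj' hc0, cpow_def_of_ne_zero hb0, cpow_def_of_ne_zero hb0,
    exp_eq_exp_iff_exists_int, ← ofReal_log hb.le] at hpow
  obtain ⟨n, hn⟩ := hpow
  have hL : Real.log b ≠ 0 := Real.log_ne_zero_of_pos_of_ne_one hb hb1
  have him : -(Real.log b * x) = -(Real.log b * y) + n * (2 * π) := by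
    simpa using congrArg im hn
  refine AddSubgroup.mem_zmultiples_iff.mpr ⟨-n, ?_⟩
  rw [zsmul_eq_mul]
  field_simp
  push_cast
  linarith

theorem card_filter_eulerFactor_eq_zero_le {b : ℝ} (hb : 1 < b) {t h : ℝ} (hh : 0 ≤ h)
    (Z : Finset ℂ) (hZ : ∀ ρ ∈ Z, ∃ η : ℝ, ρ = η * I ∧ t ≤ η ∧ η ≤ t + h) :
    (#{ρ ∈ Z | eulerFactor c b ρ = 0} : ℝ) ≤ h * Real.log b / (2 * π) + 1 := by
  have hZ' : ∀ ρ ∈ Z, ρ = ρ.im * I ∧ ρ.im ∈ Set.Icc t (t + h) := by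
    intro ρ hρ
    obtain ⟨η, rfl, htη, hηt⟩ := hZ ρ hρ
    simp [htη, hηt]
  have hinj : Set.InjOn im ({ρ ∈ Z | eulerFactor c b ρ = 0} : Finset ℂ) :=
    fun ρ hρ ρ' hρ' him ↦ by
      rw [(hZ' ρ (mem_filter.1 hρ).1).1, (hZ' ρ' (mem_filter.1 hρ').1).1, him]
  rw [← card_image_of_injOn hinj, ← div_div_eq_mul_div]
  refine card_le_div_add_one_of_sub_mem_zmultiples (a := t) hh
    (div_pos two_pi_pos (Real.log_pos hb)) ?_ ?_
  · simp only [mem_image, mem_filter]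
    rintro _ ⟨ρ, ⟨hρ, -⟩, rfl⟩
    exact (hZ' ρ hρ).2
  · simp only [mem_image, mem_filter]
    rintro _ ⟨ρ, ⟨hρ, hρ0⟩, rfl⟩ _ ⟨ρ', ⟨hρ', hρ'0⟩, rfl⟩
    rw [(hZ' ρ hρ).1] at hρ0
    rw [(hZ' ρ' hρ').1] at hρ'0
    exact sub_mem_zmultiples_of_eulerFactor_mul_I_eq_zero (by linarith) hb.ne' hρ0 hρ'0

end eulerFactor

/-- Zero-counting bound for `F(s) = ∏_{p ∣ q}(1 - χ*(p) p^{-s})`: there is an absolute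
constant `C` such that the number (with multiplicity) of zeros `iη` of `F` with
`t ≤ η ≤ t + h` is at most `C · h · (ω(q)/h + log q + h·r/(h² + t²))`, where `ω(q)` is the
number of distinct prime factors of `q` and `r` is the number of primes `p ∣ q` with
`χ*(p) = 1`. -/
theorem finite_euler_product_zero_counting :
    ∃ C : ℝ, 0 < C ∧
      ∀ (q d : ℕ) (χ : DirichletCharacter ℂ d), 2 ≤ q → d ∣ q → d ≠ q →
        (∃ p : ℕ, p.Prime ∧ p ∣ q ∧ ¬ p ∣ d) →
        ∀ (t h : ℝ), 0 < h →
        ∀ (Z : Finset ℂ) (m : ℂ → ℕ),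
          (∀ ρ : ℂ, ρ ∈ Z ↔
            (∏ p ∈ q.primeFactors, (1 - χ (p : ZMod d) * (p : ℂ) ^ (-ρ))) = 0 ∧
              ∃ η : ℝ, ρ = η * Complex.I ∧ t ≤ η ∧ η ≤ t + h) →
          (∀ ρ ∈ Z, ∃ g : ℂ → ℂ, AnalyticAt ℂ g ρ ∧ g ρ ≠ 0 ∧ ∀ z : ℂ,
            (∏ p ∈ q.primeFactors, (1 - χ (p : ZMod d) * (p : ℂ) ^ (-z))) =
              (z - ρ) ^ (m ρ) * g z) →
          (∑ ρ ∈ Z, (m ρ : ℝ)) ≤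
            C * h * ((q.primeFactors.card : ℝ) / h + Real.log q +
              h * ((q.primeFactors.filter (fun p : ℕ => χ (p : ZMod d) = 1)).card : ℝ) /
                (h ^ 2 + t ^ 2)) := by
  refine ⟨1, one_pos, fun q d χ _ _ _ _ t h hh Z m hZ hm ↦ ?_⟩
  have hp_one_lt {p : ℕ} (hp : p ∈ q.primeFactors) : 1 < p :=
    (Nat.prime_of_mem_primeFactors hp).one_lt
  have hmult : ∀ ρ ∈ Z, m ρ = #(q.primeFactors.filter fun p : ℕ ↦ eulerFactor (χ p) p ρ = 0) :=
    fun ρ hρ ↦ by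
      obtain ⟨g, hg, hgρ, hprod⟩ := hm ρ hρ
      exact eq_card_filter_eulerFactor_eq_zero_of_prod_eq_pow_mul
        (fun p hp ↦ mod_cast (hp_one_lt hp).ne_bot) (fun p hp ↦ mod_cast (hp_one_lt hp).ne')
        hg hgρ hprod
  have hcount : ∀ p ∈ q.primeFactors,
      (#{ρ ∈ Z | eulerFactor (χ p) (p : ℂ) ρ = 0} : ℝ) ≤ h * Real.log p + 1 := fun p hp ↦ by
    have hcard := card_filter_eulerFactor_eq_zero_le (c := χ p) (b := p)
      (mod_cast hp_one_lt hp) hh.le Z fun ρ hρ ↦ ((hZ ρ).mp hρ).2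
    rw [ofReal_natCast] at hcard
    have h2π : h * Real.log p / (2 * π) ≤ h * Real.log p :=
      div_le_self (by positivity) (by linarith [pi_gt_three])
    linarith
  have hX : 0 ≤ h * (h * ((q.primeFactors.filter (fun p : ℕ => χ (p : ZMod d) = 1)).card : ℝ) /
      (h ^ 2 + t ^ 2)) := by positivity
  calc (∑ ρ ∈ Z, (m ρ : ℝ))
      = ∑ p ∈ q.primeFactors, (#{ρ ∈ Z | eulerFactor (χ p) (p : ℂ) ρ = 0} : ℝ) := by
        rw [sum_congr rfl fun ρ hρ ↦ congrArg (Nat.cast (R := ℝ)) (hmult ρ hρ)]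
        exact_mod_cast sum_card_bipartiteAbove_eq_sum_card_bipartiteBelow _
    _ ≤ ∑ p ∈ q.primeFactors, (h * Real.log p + 1) := sum_le_sum hcount
    _ = h * ∑ p ∈ q.primeFactors, Real.log p + q.primeFactors.card := by
        rw [sum_add_distrib, mul_sum, sum_const, nsmul_one]
    _ ≤ h * Real.log q + q.primeFactors.card := by
        gcongr
        exact Nat.sum_log_primeFactors_le_log q
    _ ≤ _ := by
        rw [one_mul, mul_add, mul_add, mul_div_cancel₀ _ hh.ne']
        linarith
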